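/- Let N ≥ 2 and let M be the N × N real tridiagonal matrix with diagonal entries a₂ = 2/(1 + 2cos h) and off-diagonal (sub- and super-diagonal) entries a₁ = sin²(h/2)/(sin h · sin(3h/2)), where 0 < h < π/2. Then a₂ > 2a₁ > 0, so M is strictly diagonally dominant with positive diagonal, and hence M is invertible. -/
import Mathlib


open Finset

/-- The trigonometric B-spline collocation matrix: for `0 < h < π/2`, the tridiagonal
matrix with diagonal `a₂ = 2/(1+2cos h)` and off-diagonal entries
`a₁ = sin²(h/2)/(sin h · sin(3h/2))` satisfies `a₂ > 2a₁ > 0`, is strictly diagonally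
dominant with positive diagonal, and hence invertible. -/
theorem collocation_matrix_invertible
    (N : ℕ) (hN : 2 ≤ N) (h : ℝ) (h0 : 0 < h) (h1 : h < Real.pi / 2)
    (a₁ a₂ : ℝ)
    (ha₁ : a₁ = Real.sin (h/2) ^ 2 / (Real.sin h * Real.sin (3*h/2)))
    (ha₂ : a₂ = 2 / (1 + 2 * Real.cos h))
    (M : Matrix (Fin N) (Fin N) ℝ)
    (hM : ∀ i j, M i j = if (i : ℕ) = j then a₂
      else if (i : ℕ) = j + 1 ∨ (j : ℕ) = i + 1 then a₁ else 0) :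
    a₂ > 2 * a₁ ∧ 0 < a₁ ∧
    (∀ i, ∑ j ∈ Finset.univ.erase i, |M i j| < |M i i|) ∧
    (∀ i, 0 < M i i) ∧
    IsUnit M := by
  have hπ := Real.pi_gt_three
  have hs : 0 < Real.sin (h/2) :=
    Real.sin_pos_of_pos_of_lt_pi (by linarith) (by linarith)
  have hc : 1/2 < Real.cos (h/2) := by
    have h2 : Real.cos (Real.pi/3) < Real.cos (h/2) := by
      apply Real.cos_lt_cos_of_nonneg_of_le_pi (by linarith) (by linarith)
      linarith
    rwa [Real.cos_pi_div_three] at h2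
  set s := Real.sin (h/2) with hsdef
  set c := Real.cos (h/2) with hcdef
  have hcpos : 0 < c := by linarith
  have hcos : Real.cos h = 2*c^2 - 1 := by
    rw [show h = 2*(h/2) by ring, Real.cos_two_mul]
  have hsin : Real.sin h = 2*s*c := by
    rw [show h = 2*(h/2) by ring, Real.sin_two_mul]
  have h32 : Real.sin (3*h/2) = s*(4*c^2-1) := by
    rw [show 3*h/2 = h/2 + h by ring, Real.sin_add, hcos, hsin]; ring
  have h4c : 0 < 4*c^2 - 1 := by nlinarith
  have ha₁' : a₁ = 1/(2*c*(4*c^2-1)) := by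
    rw [ha₁, hsin, h32]
    field_simp
  have ha₂' : a₂ = 2/(4*c^2-1) := by
    rw [ha₂, hcos]; congr 1; ring
  have hA1 : 0 < a₁ := by rw [ha₁']; positivity
  have h2a₁ : 2*a₁ = 1/(c*(4*c^2-1)) := by rw [ha₁']; field_simp
  have hgt : a₂ > 2*a₁ := by
    rw [h2a₁, ha₂', gt_iff_lt, div_lt_div_iff₀ (by positivity) (by positivity)]
    nlinarith
  have ha₂pos : 0 < a₂ := by linarith
  have hMii : ∀ i : Fin N, M i i = a₂ := fun i => by rw [hM]; simp
  have key : ∀ i : Fin N, ∑ j ∈ Finset.univ.erase i, |M i j| < |M i i| := by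
    intro i
    set P : Fin N → Prop := fun j => (i : ℕ) = (j : ℕ) + 1 ∨ (j : ℕ) = (i : ℕ) + 1 with hP
    have hcard : ((Finset.univ.erase i).filter P).card ≤ 2 := by
      have hsub : ∀ j ∈ (Finset.univ.erase i).filter P,
          (j : ℕ) ∈ ({(i : ℕ) - 1, (i : ℕ) + 1} : Finset ℕ) := by
        intro j hj
        have := (Finset.mem_filter.mp hj).2
        simp only [Finset.mem_insert, Finset.mem_singleton]
        omega
      calc ((Finset.univ.erase i).filter P).card
          ≤ ({(i : ℕ) - 1, (i : ℕ) + 1} : Finset ℕ).card :=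
            Finset.card_le_card_of_injOn Fin.val hsub
              (fun a _ b _ hab => Fin.val_injective hab)
        _ ≤ 2 := by
            apply le_trans (Finset.card_insert_le _ _); simp
    calc ∑ j ∈ Finset.univ.erase i, |M i j|
        = ∑ j ∈ (Finset.univ.erase i).filter P, a₁ := by
          rw [Finset.sum_filter]
          apply Finset.sum_congr rfl
          intro j hj
          have hji : (i : ℕ) ≠ (j : ℕ) := fun hh =>
            (Finset.mem_erase.mp hj).1 (Fin.ext hh.symm)
          rw [hM, if_neg hji]
          by_cases hp : P j
          · rw [if_pos hp]; exact abs_of_pos hA1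
          · rw [if_neg hp]; exact abs_zero
      _ = ((Finset.univ.erase i).filter P).card * a₁ := by
          rw [Finset.sum_const, nsmul_eq_mul]
      _ ≤ 2 * a₁ := by
          apply mul_le_mul_of_nonneg_right _ hA1.le
          exact_mod_cast hcard
      _ < a₂ := hgt
      _ = |M i i| := by rw [hMii, abs_of_pos ha₂pos]
  refine ⟨hgt, hA1, key, fun i => by rw [hMii]; exact ha₂pos, ?_⟩
  rw [Matrix.isUnit_iff_isUnit_det, isUnit_iff_ne_zero]
  exact det_ne_zero_of_sum_row_lt_diag (by simpa [Real.norm_eq_abs] using key)
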